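/- arXiv:2211.17123 — 3 statements merged into one kernel-verified Lean document; each statement's English description precedes it below -/
import Mathlib

section
/- Let K be a perfect field, L/K a Galois extension of degree 3 with Galois group generated by g, and let ξ, ξ' ∈ K*. Set R_ξ and R_{ξ'} to be the 3×3 matrices with first row (0,0,ξ) resp. (0,0,ξ'), second row (1,0,0), third row (0,1,0). If there exist A ∈ GL₃(L) and a ∈ L* such that a·R_{ξ'} = A^{-1}·R_ξ·g(A), then ξ/ξ' = a·g(a)·g²(a), i.e. ξ/ξ' is a norm of the extension L/K. -/
open Matrix

/-!
With `R_x` the companion matrix of `X³ - x` we have `R_x³ = x • 1`, and `R_ξ`, `R_{ξ'}` are fixed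
by `g` because their entries lie in `K`. Applying `g` to `a • (A * R_{ξ'}) = R_ξ * g(A)` twice
and chaining the three equations gives `(a · g(a) · g²(a)) • (A * R_{ξ'}³) = R_ξ³ * g³(A)`.
Since `g³ = 1` this reads `(a · g(a) · g²(a) · ξ') • A = ξ • A`, and `A ≠ 0`.
-/

namespace Matrix

section TwistedConjugacy

variable {n L F : Type*} [Fintype n] [CommRing L] [FunLike F L L] [RingHomClass F L L]

theorem map_smul_mul (σ : F) (a : L) (A B : Matrix n n L) :
    (a • (A * B)).map σ = σ a • (A.map σ * B.map σ) := by
  rw [map_smul' _ _ _ (map_mul σ), Matrix.map_mul]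

theorem prod_iterate_smul_mul_pow [DecidableEq n] (σ : F) {R R' A : Matrix n n L} {a : L}
    (hR : R.map σ = R) (hR' : R'.map σ = R') (h : a • (A * R') = R * A.map σ) (k : ℕ) :
    (∏ i ∈ Finset.range k, (⇑σ)^[i] a) • (A * R' ^ k) = R ^ k * A.map (⇑σ)^[k] := by
  induction k generalizing A a with
  | zero => simp
  | succ k ih =>
    have hσ : σ a • (A.map σ * R') = R * (A.map σ).map σ := by
      rw [← hR, ← hR', ← map_smul_mul, h, Matrix.map_mul]
    calc (∏ i ∈ Finset.range (k + 1), (⇑σ)^[i] a) • (A * R' ^ (k + 1))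
        = (∏ i ∈ Finset.range k, (⇑σ)^[i] (σ a)) • ((a • (A * R')) * R' ^ k) := by
          simp only [Finset.prod_range_succ', Function.iterate_succ_apply,
            Function.iterate_zero_apply, pow_succ', mul_assoc, smul_mul_assoc, smul_smul]
      _ = R * ((∏ i ∈ Finset.range k, (⇑σ)^[i] (σ a)) • (A.map σ * R' ^ k)) := by
          rw [h, mul_assoc, mul_smul_comm]
      _ = R ^ (k + 1) * A.map (⇑σ)^[k + 1] := by
          rw [ih hσ, map_map, ← Function.iterate_succ, pow_succ', mul_assoc]

end TwistedConjugacy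

section CubicCompanion

variable {R : Type*} [CommRing R]

/-- The companion matrix of `X³ - x`. -/
def cubicCompanion (x : R) : Matrix (Fin 3) (Fin 3) R :=
  !![0, 0, x; 1, 0, 0; 0, 1, 0]

theorem cubicCompanion_pow_three (x : R) : cubicCompanion x ^ 3 = x • 1 := by
  ext i j
  fin_cases i <;> fin_cases j <;> simp [cubicCompanion, pow_succ, mul_apply, Fin.sum_univ_three]

theorem map_cubicCompanion {F : Type*} [FunLike F R R] [RingHomClass F R R] (σ : F) (x : R) :
    (cubicCompanion x).map σ = cubicCompanion (σ x) := by
  ext i j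
  fin_cases i <;> fin_cases j <;> simp [cubicCompanion]

end CubicCompanion

end Matrix

theorem AlgEquiv.pow_finrank_eq_one {K L : Type*} [Field K] [Field L] [Algebra K L]
    [FiniteDimensional K L] [IsGalois K L] (g : L ≃ₐ[K] L) : g ^ Module.finrank K L = 1 := by
  rw [← IsGalois.card_aut_eq_finrank]
  exact pow_card_eq_one'

theorem stmt2_general (K L : Type*) [Field K] [Field L] [Algebra K L]
    [IsGalois K L] (hdeg : Module.finrank K L = 3)
    (g : L ≃ₐ[K] L)
    (ξ ξ' : K) (hξ' : ξ' ≠ 0)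
    (A : Matrix (Fin 3) (Fin 3) L) (hA : IsUnit A.det)
    (a : L)
    (h : a • (!![0, 0, algebraMap K L ξ'; 1, 0, 0; 0, 1, 0]) =
        A⁻¹ * (!![0, 0, algebraMap K L ξ; 1, 0, 0; 0, 1, 0]) * A.map ⇑g) :
    algebraMap K L ξ / algebraMap K L ξ' = a * g a * g (g a) := by
  have : FiniteDimensional K L := Module.finite_of_finrank_eq_succ hdeg
  have hg3 : (⇑g)^[3] = id := by
    rw [← AlgEquiv.coe_pow, ← hdeg, g.pow_finrank_eq_one]
    rfl
  have hfix (x : K) :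
      (cubicCompanion (algebraMap K L x)).map g = cubicCompanion (algebraMap K L x) := by
    rw [map_cubicCompanion, g.commutes]
  have htwist : a • (A * cubicCompanion (algebraMap K L ξ')) =
      cubicCompanion (algebraMap K L ξ) * A.map g := by
    rw [← mul_smul_comm, cubicCompanion, h, ← mul_assoc, ← mul_assoc, mul_nonsing_inv _ hA,
      one_mul]
    rfl
  have hcube := prod_iterate_smul_mul_pow g (hfix ξ) (hfix ξ') htwist 3
  simp only [cubicCompanion_pow_three, hg3, map_id, Finset.prod_range_succ, Finset.prod_range_zero,
    Function.iterate_zero_apply, Function.iterate_succ_apply, mul_smul_comm,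
    smul_mul_assoc, mul_one, one_mul, smul_smul] at hcube
  have hA0 : A ≠ 0 := by rintro rfl; simp at hA
  rw [div_eq_iff (by simpa using hξ'), ← smul_left_injective L hA0 hcube]

/-- Let `K` be a perfect field, `L/K` Galois of degree 3 with Galois group generated
by `g`, and `ξ, ξ' ∈ K*`. Let `R_ξ`, `R_{ξ'}` be the matrices with rows
`(0,0,ξ), (1,0,0), (0,1,0)` resp. `(0,0,ξ'), (1,0,0), (0,1,0)`. If there are
`A ∈ GL₃(L)` and `a ∈ L*` with `a • R_{ξ'} = A⁻¹ * R_ξ * g(A)` (where `g` acts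
entrywise), then `ξ/ξ' = a · g(a) · g²(a)`, i.e. `ξ/ξ'` is a norm of `L/K`. -/
theorem stmt2 (K L : Type*) [Field K] [Field L] [Algebra K L]
    [PerfectField K] [IsGalois K L] (hdeg : Module.finrank K L = 3)
    (g : L ≃ₐ[K] L) (hgen : ∀ σ : L ≃ₐ[K] L, σ ∈ Subgroup.zpowers g)
    (ξ ξ' : K) (hξ : ξ ≠ 0) (hξ' : ξ' ≠ 0)
    (A : Matrix (Fin 3) (Fin 3) L) (hA : IsUnit A.det)
    (a : L) (ha : a ≠ 0)
    (h : a • (!![0, 0, algebraMap K L ξ'; 1, 0, 0; 0, 1, 0]) =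
        A⁻¹ * (!![0, 0, algebraMap K L ξ; 1, 0, 0; 0, 1, 0]) * A.map ⇑g) :
    algebraMap K L ξ / algebraMap K L ξ' = a * g a * g (g a) :=
  stmt2_general K L hdeg g ξ ξ' hξ' A hA a h
end

section
/- Let G be a group that admits a surjective group homomorphism onto the free group F(S) on a set S of cardinality equal to that of G. Then G is not Hopfian, i.e. there exists a surjective endomorphism of G that is not injective. -/
universe u

/-- A group `G` admitting a surjective homomorphism onto the free group on a set `S`
of the same cardinality as `G` is not Hopfian: it has a surjective endomorphism
which is not injective. -/
theorem stmt9 (G S : Type u) [Group G]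
    (hcard : Cardinal.mk S = Cardinal.mk G)
    (φ : G →* FreeGroup S) (hφ : Function.Surjective φ) :
    ∃ ψ : G →* G, Function.Surjective ψ ∧ ¬ Function.Injective ψ := by
  obtain ⟨e⟩ := Cardinal.eq.mp hcard
  set π : FreeGroup S →* G := FreeGroup.lift e with hπ
  have hπs : Function.Surjective π := fun g =>
    ⟨FreeGroup.of (e.symm g), by simp [hπ]⟩
  refine ⟨π.comp φ, hπs.comp hφ, fun hinj => ?_⟩
  obtain ⟨g, hg⟩ := hφ (FreeGroup.of (e.symm 1))
  have h1 : π.comp φ g = π.comp φ 1 := by simp [hπ, hg]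
  have hg1 : g = 1 := hinj h1
  exact FreeGroup.of_ne_one (e.symm 1) (by rw [← hg, hg1, map_one])
end

section
/- Let n ≥ 2 and d ≥ 2 be integers, and in ℙⁿ × ℙ¹ with coordinates ([x₀:⋯:xₙ],[u:v]) consider Q = {x₀^d·u − x₁^d·v + Σ_{i=2}^n (bᵢu − aᵢv)xᵢ^d = 0, v³x₀ = u³x₁}, where a₂,…,aₙ, b₂,…,bₙ ∈ ℂ* are chosen so that the ratios bᵢ/aᵢ (i = 2,…,n) are pairwise distinct and none is a root of unity. Then Q is smooth of dimension n − 1. -/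
open MvPolynomial

/-- `A(x) = x₁^d + Σ_{i≥2} aᵢ xᵢ^d`, as a polynomial in the variables
`xᵢ = X (inl i)` and `u = X (inr 0)`, `v = X (inr 1)`. -/
noncomputable def Apoly (n d : ℕ) (a : Fin (n + 1) → ℂ) :
    MvPolynomial (Fin (n + 1) ⊕ Fin 2) ℂ :=
  X (Sum.inl 1) ^ d +
    ∑ i ∈ Finset.univ.filter (fun i : Fin (n + 1) => 2 ≤ (i : ℕ)),
      C (a i) * X (Sum.inl i) ^ d

/-- `B(x) = x₀^d + Σ_{i≥2} bᵢ xᵢ^d`. -/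
noncomputable def Bpoly (n d : ℕ) (b : Fin (n + 1) → ℂ) :
    MvPolynomial (Fin (n + 1) ⊕ Fin 2) ℂ :=
  X (Sum.inl 0) ^ d +
    ∑ i ∈ Finset.univ.filter (fun i : Fin (n + 1) => 2 ≤ (i : ℕ)),
      C (b i) * X (Sum.inl i) ^ d

/-- The first defining equation of `Q`:
`x₀^d u − x₁^d v + Σ_{i≥2}(bᵢ u − aᵢ v) xᵢ^d = B(x)·u − A(x)·v = 0`,
written as `A(x)·v − B(x)·u`. -/
noncomputable def P1poly (n d : ℕ) (a b : Fin (n + 1) → ℂ) :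
    MvPolynomial (Fin (n + 1) ⊕ Fin 2) ℂ :=
  Apoly n d a * X (Sum.inr 1) - Bpoly n d b * X (Sum.inr 0)

/-- The second defining equation of `Q`: `v³x₀ − u³x₁ = 0`. -/
noncomputable def P2poly (n : ℕ) : MvPolynomial (Fin (n + 1) ⊕ Fin 2) ℂ :=
  X (Sum.inr 1) ^ 3 * X (Sum.inl 0) - X (Sum.inr 0) ^ 3 * X (Sum.inl 1)

section helpers
variable {n d : ℕ} (a b : Fin (n+1) → ℂ) (z : (Fin (n+1) ⊕ Fin 2) → ℂ)

lemma evalA : eval z (Apoly n d a) = (z (Sum.inl 1))^d +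
    ∑ i ∈ Finset.univ.filter (fun i : Fin (n + 1) => 2 ≤ (i : ℕ)),
      a i * z (Sum.inl i)^d := by
  simp [Apoly]

lemma evalB : eval z (Bpoly n d a) = (z (Sum.inl 0))^d +
    ∑ i ∈ Finset.univ.filter (fun i : Fin (n + 1) => 2 ≤ (i : ℕ)),
      a i * z (Sum.inl i)^d := by
  simp [Bpoly]

lemma evalpdA (j : Fin (n+1)) :
    eval z (pderiv (Sum.inl j) (Apoly n d a)) =
      (if j = 1 then (d:ℂ) * z (Sum.inl 1)^(d-1) else 0) +
      (if 2 ≤ (j:ℕ) then a j * ((d:ℂ) * z (Sum.inl j)^(d-1)) else 0) := by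
  classical
  simp only [Apoly, map_add, map_sum, pderiv_C_mul, pderiv_pow, pderiv_X]
  rw [Finset.sum_congr rfl (fun i hi => ?_)
    (g := fun i => if i = j then a i * ((d:ℂ) * z (Sum.inl i)^(d-1)) else 0)]
  · rw [Finset.sum_ite_eq' (Finset.univ.filter (fun i : Fin (n + 1) => 2 ≤ (i : ℕ))) j
      (fun i => a i * ((d:ℂ) * z (Sum.inl i)^(d-1)))]
    simp only [Finset.mem_filter, Finset.mem_univ, true_and]
    congr 1
    by_cases h1 : j = (1 : Fin (n+1))
    · simp [h1, Pi.single_apply]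
    · rw [if_neg h1]
      rw [Pi.single_apply, if_neg (show ¬ (Sum.inl (1:Fin (n+1)) : Fin (n+1) ⊕ Fin 2) = Sum.inl j by simpa [eq_comm] using h1)]
      simp
  · rw [Pi.single_apply]
    by_cases h : i = j
    · simp [h, mul_comm]
    · rw [if_neg (show ¬ Sum.inl i = Sum.inl j by simpa using h)]
      simp [h]

lemma evalpdB (j : Fin (n+1)) :
    eval z (pderiv (Sum.inl j) (Bpoly n d a)) =
      (if j = 0 then (d:ℂ) * z (Sum.inl 0)^(d-1) else 0) +
      (if 2 ≤ (j:ℕ) then a j * ((d:ℂ) * z (Sum.inl j)^(d-1)) else 0) := by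
  classical
  simp only [Bpoly, map_add, map_sum, pderiv_C_mul, pderiv_pow, pderiv_X]
  rw [Finset.sum_congr rfl (fun i hi => ?_)
    (g := fun i => if i = j then a i * ((d:ℂ) * z (Sum.inl i)^(d-1)) else 0)]
  · rw [Finset.sum_ite_eq' (Finset.univ.filter (fun i : Fin (n + 1) => 2 ≤ (i : ℕ))) j
      (fun i => a i * ((d:ℂ) * z (Sum.inl i)^(d-1)))]
    simp only [Finset.mem_filter, Finset.mem_univ, true_and]
    congr 1
    by_cases h1 : j = (0 : Fin (n+1))
    · simp [h1, Pi.single_apply]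
    · rw [if_neg h1]
      rw [Pi.single_apply, if_neg (show ¬ (Sum.inl (0:Fin (n+1)) : Fin (n+1) ⊕ Fin 2) = Sum.inl j by simpa [eq_comm] using h1)]
      simp
  · rw [Pi.single_apply]
    by_cases h : i = j
    · simp [h, mul_comm]
    · rw [if_neg (show ¬ Sum.inl i = Sum.inl j by simpa using h)]
      simp [h]

lemma evalpdAr (k : Fin 2) :
    eval z (pderiv (Sum.inr k) (Apoly n d a)) = 0 := by
  classical
  simp [Apoly, pderiv_C_mul, pderiv_pow, pderiv_X, Pi.single_apply]

lemma evalpdBr (k : Fin 2) :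
    eval z (pderiv (Sum.inr k) (Bpoly n d a)) = 0 := by
  classical
  simp [Bpoly, pderiv_C_mul, pderiv_pow, pderiv_X, Pi.single_apply]

lemma evalP2 : eval z (P2poly n) =
    z (Sum.inr 1)^3 * z (Sum.inl 0) - z (Sum.inr 0)^3 * z (Sum.inl 1) := by
  simp [P2poly]

lemma evalpdP2l (j : Fin (n+1)) :
    eval z (pderiv (Sum.inl j) (P2poly n)) =
      (if j = 0 then z (Sum.inr 1)^3 else 0) - (if j = 1 then z (Sum.inr 0)^3 else 0) := by
  classical
  simp only [P2poly, map_sub, pderiv_mul, pderiv_pow, pderiv_X, Pi.single_apply]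
  by_cases h0 : j = 0 <;> by_cases h1 : j = 1 <;>
    simp [h0, h1, Sum.inl.injEq, eq_comm, apply_ite (eval z)]

lemma evalpdP2u :
    eval z (pderiv (Sum.inr 0) (P2poly n)) = -(3 * z (Sum.inr 0)^2 * z (Sum.inl 1)) := by
  classical
  simp [P2poly, pderiv_mul, pderiv_pow, pderiv_X, Pi.single_apply]
  ring

lemma evalpdP2v :
    eval z (pderiv (Sum.inr 1) (P2poly n)) = 3 * z (Sum.inr 1)^2 * z (Sum.inl 0) := by
  classical
  simp [P2poly, pderiv_mul, pderiv_pow, pderiv_X, Pi.single_apply]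
  ring

lemma evalpdP1l (j : Fin (n+1)) :
    eval z (pderiv (Sum.inl j) (P1poly n d a b)) =
      ((if j = 1 then (d:ℂ) * z (Sum.inl 1)^(d-1) else 0) +
       (if 2 ≤ (j:ℕ) then a j * ((d:ℂ) * z (Sum.inl j)^(d-1)) else 0)) * z (Sum.inr 1) -
      ((if j = 0 then (d:ℂ) * z (Sum.inl 0)^(d-1) else 0) +
       (if 2 ≤ (j:ℕ) then b j * ((d:ℂ) * z (Sum.inl j)^(d-1)) else 0)) * z (Sum.inr 0) := by
  rw [P1poly, map_sub, pderiv_mul, pderiv_mul,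
    pderiv_X_of_ne (Sum.inr_ne_inl), pderiv_X_of_ne (Sum.inr_ne_inl)]
  simp [evalpdA, evalpdB]

lemma evalpdP1u :
    eval z (pderiv (Sum.inr 0) (P1poly n d a b)) = -(eval z (Bpoly n d b)) := by
  rw [P1poly, map_sub, pderiv_mul, pderiv_mul,
    pderiv_X_of_ne (show (Sum.inr 1 : Fin (n+1) ⊕ Fin 2) ≠ Sum.inr 0 by simp),
    pderiv_X_self]
  simp [evalpdAr, evalpdBr]

lemma evalpdP1v :
    eval z (pderiv (Sum.inr 1) (P1poly n d a b)) = eval z (Apoly n d a) := by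
  rw [P1poly, map_sub, pderiv_mul, pderiv_mul, pderiv_X_self,
    pderiv_X_of_ne (show (Sum.inr 0 : Fin (n+1) ⊕ Fin 2) ≠ Sum.inr 1 by simp)]
  simp [evalpdAr, evalpdBr]

end helpers

lemma fin_tri {p : ℕ} (i : Fin (p+3)) : i = 0 ∨ i = 1 ∨ 2 ≤ (i:ℕ) := by
  by_cases h : 2 ≤ (i:ℕ)
  · exact Or.inr (Or.inr h)
  · have h' : (i:ℕ) = 0 ∨ (i:ℕ) = 1 := by omega
    rcases h' with h0 | h1
    · exact Or.inl (Fin.ext (by simp [h0]))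
    · exact Or.inr (Or.inl (Fin.ext (by simp [h1])))


/-- Let `n ≥ 2`, `d ≥ 2`, and let `a₂,…,aₙ, b₂,…,bₙ ∈ ℂ*` be such that the ratios
`bᵢ/aᵢ` are pairwise distinct and none is a root of unity. Then the subvariety
`Q ⊂ ℙⁿ × ℙ¹` cut out by `A(x)v = B(x)u` and `v³x₀ = u³x₁` is smooth of dimension
`n − 1`: at every point of the bi-cone with both components nonzero satisfying the
two equations, the gradients of the two equations are linearly independent (so `Q`
is everywhere a smooth complete intersection of codimension 2 in `ℙⁿ × ℙ¹`). -/
theorem stmt18 (n d : ℕ) (hn : 2 ≤ n) (hd : 2 ≤ d)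
    (a b : Fin (n + 1) → ℂ)
    (ha : ∀ i : Fin (n + 1), 2 ≤ (i : ℕ) → a i ≠ 0)
    (hb : ∀ i : Fin (n + 1), 2 ≤ (i : ℕ) → b i ≠ 0)
    (hdist : ∀ i j : Fin (n + 1), 2 ≤ (i : ℕ) → 2 ≤ (j : ℕ) →
      b i * a j = b j * a i → i = j)
    (hroot : ∀ i : Fin (n + 1), 2 ≤ (i : ℕ) → ∀ k : ℕ, 0 < k → (b i / a i) ^ k ≠ 1) :
    ∀ z : (Fin (n + 1) ⊕ Fin 2) → ℂ,
      (fun i : Fin (n + 1) => z (Sum.inl i)) ≠ 0 →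
      (fun j : Fin 2 => z (Sum.inr j)) ≠ 0 →
      eval z (P1poly n d a b) = 0 → eval z (P2poly n) = 0 →
      LinearIndependent ℂ
        ![fun j : Fin (n + 1) ⊕ Fin 2 => eval z (pderiv j (P1poly n d a b)),
          fun j : Fin (n + 1) ⊕ Fin 2 => eval z (pderiv j (P2poly n))] := by
  obtain ⟨p, rfl⟩ : ∃ p, n = p + 2 := ⟨n - 2, by omega⟩
  obtain ⟨m, rfl⟩ : ∃ m, d = m + 1 := ⟨d - 1, by omega⟩
  have hm : 1 ≤ m := by omega
  intro z hx huv hq1 hq2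
  have hne01 : (0 : Fin (p+2+1)) ≠ 1 := by
    simp [Fin.ext_iff]
  have h2le0 : ¬ (2 ≤ ((0 : Fin (p+2+1)) : ℕ)) := by simp
  have h2le1 : ¬ (2 ≤ ((1 : Fin (p+2+1)) : ℕ)) := by simp
  have hdC : ((m:ℂ) + 1) ≠ 0 := by
    have := Nat.cast_ne_zero (R := ℂ) (n := m+1) |>.mpr (by omega)
    push_cast at this; exact this
  -- simplified equations
  rw [P1poly, map_sub, map_mul, map_mul, eval_X, eval_X, evalA, evalB] at hq1
  rw [evalP2] at hq2
  rw [linearIndependent_fin2]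
  simp only [Matrix.cons_val_one, Matrix.head_cons, Matrix.cons_val_zero]
  constructor
  · intro h
    have h0 := congrFun h (Sum.inl 0)
    have h1 := congrFun h (Sum.inl 1)
    rw [evalpdP2l] at h0 h1
    simp only [if_pos rfl, if_neg hne01, if_neg (Ne.symm hne01), Pi.zero_apply,
      sub_zero, zero_sub, neg_eq_zero] at h0 h1
    apply huv
    funext j
    have hv0 : z (Sum.inr 1) = 0 := by
      have := pow_eq_zero_iff (n := 3) (by norm_num) |>.mp h0; exact this
    have hu0 : z (Sum.inr 0) = 0 := by
      have := pow_eq_zero_iff (n := 3) (by norm_num) |>.mp h1; exact this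
    fin_cases j
    · exact hu0
    · exact hv0
  · intro lam heq
    have E0 := congrFun heq (Sum.inl 0)
    have E1 := congrFun heq (Sum.inl 1)
    have Eu := congrFun heq (Sum.inr 0)
    have Ev := congrFun heq (Sum.inr 1)
    simp only [Pi.smul_apply, smul_eq_mul, evalpdP2l, evalpdP2u, evalpdP2v,
      evalpdP1l, evalpdP1u, evalpdP1v, evalA, evalB,
      if_pos rfl, if_neg hne01, if_neg (Ne.symm hne01), if_neg h2le0, if_neg h2le1,
      add_zero, zero_add, sub_zero, zero_sub, zero_mul, mul_zero, if_true,
      Nat.add_sub_cancel] at E0 E1 Eu Ev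
    -- E0 : lam * z (Sum.inr 1)^3 = -((↑(m+1)) * x0^m * z (Sum.inr 0)) roughly
    have Ej : ∀ j : Fin (p+2+1), 2 ≤ (j:ℕ) →
        z (Sum.inl j) ^ m * (a j * z (Sum.inr 1) - b j * z (Sum.inr 0)) = 0 := by
      intro j hj
      have E := congrFun heq (Sum.inl j)
      have hj0 : j ≠ 0 := by intro h; rw [h] at hj; simp at hj
      have hj1 : j ≠ 1 := by intro h; rw [h] at hj; simp at hj
      simp only [Pi.smul_apply, smul_eq_mul, evalpdP2l, evalpdP1l,
        if_neg hj0, if_neg hj1, if_pos hj, zero_add, sub_zero, zero_sub,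
        mul_zero, zero_mul] at E
      push_cast at E
      have h' : ((m:ℂ)+1) * (z (Sum.inl j)^m * (a j * z (Sum.inr 1) - b j * z (Sum.inr 0))) = 0 := by
        linear_combination -E
      exact (mul_eq_zero.mp h').resolve_left hdC
    push_cast at E0 E1 Eu Ev
    -- helper: x j = 0 from x^m = 0
    have hpz : ∀ w : ℂ, w ^ m = 0 → w = 0 := fun w hw =>
      pow_eq_zero_iff (by omega) |>.mp hw
    by_cases hu0 : z (Sum.inr 0) = 0
    · -- case z (Sum.inr 0) = 0
      have hv0 : z (Sum.inr 1) ≠ 0 := by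
        intro hv0; apply huv; funext j; fin_cases j
        · exact hu0
        · exact hv0
      have hx0 : z (Sum.inl 0) = 0 := by
        have : z (Sum.inr 1) ^ 3 * z (Sum.inl 0) = 0 := by
          rw [hu0] at hq2; linear_combination hq2
        exact (mul_eq_zero.mp this).resolve_left (pow_ne_zero 3 hv0)
      have hlam : lam = 0 := by
        have h3 : lam * z (Sum.inr 1) ^ 3 = 0 := by rw [E0, hu0]; ring
        exact (mul_eq_zero.mp h3).resolve_right (pow_ne_zero 3 hv0)
      have hx1 : z (Sum.inl 1) = 0 := by
        apply hpz
        have h4 : ((m:ℂ)+1) * (z (Sum.inl 1) ^ m * z (Sum.inr 1)) = 0 := by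
          rw [hlam] at E1; linear_combination -E1
        have h5 := (mul_eq_zero.mp h4).resolve_left hdC
        exact (mul_eq_zero.mp h5).resolve_right hv0
      apply hx
      funext i
      rcases fin_tri i with h | h | h
      · rw [h]; exact hx0
      · rw [h]; exact hx1
      · apply hpz
        have h6 := Ej i h
        rw [hu0] at h6
        have h7 : z (Sum.inl i) ^ m * (a i * z (Sum.inr 1)) = 0 := by linear_combination h6
        rcases mul_eq_zero.mp h7 with h8 | h8
        · exact h8
        · exact absurd ((mul_eq_zero.mp h8).resolve_right hv0) (ha i h)
    · by_cases hv0 : z (Sum.inr 1) = 0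
      · -- case z (Sum.inr 1) = 0, z (Sum.inr 0) ≠ 0
        have hx1 : z (Sum.inl 1) = 0 := by
          have : z (Sum.inr 0) ^ 3 * z (Sum.inl 1) = 0 := by rw [hv0] at hq2; linear_combination -hq2
          exact (mul_eq_zero.mp this).resolve_left (pow_ne_zero 3 hu0)
        have hlam : lam = 0 := by
          have h3 : lam * z (Sum.inr 0) ^ 3 = 0 := by
            rw [hv0] at E1
            linear_combination -E1
          exact (mul_eq_zero.mp h3).resolve_right (pow_ne_zero 3 hu0)
        have hx0 : z (Sum.inl 0) = 0 := by
          apply hpz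
          have h4 : ((m:ℂ)+1) * (z (Sum.inl 0) ^ m * z (Sum.inr 0)) = 0 := by
            rw [hlam] at E0; linear_combination E0
          have h5 := (mul_eq_zero.mp h4).resolve_left hdC
          exact (mul_eq_zero.mp h5).resolve_right hu0
        apply hx
        funext i
        rcases fin_tri i with h | h | h
        · rw [h]; exact hx0
        · rw [h]; exact hx1
        · apply hpz
          have h6 := Ej i h
          rw [hv0] at h6
          have h7 : z (Sum.inl i) ^ m * (b i * z (Sum.inr 0)) = 0 := by linear_combination -h6
          rcases mul_eq_zero.mp h7 with h8 | h8
          · exact h8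
          · exact absurd ((mul_eq_zero.mp h8).resolve_right hu0) (hb i h)
      · -- case z (Sum.inr 0) ≠ 0, z (Sum.inr 1) ≠ 0
        have hxor : ∀ j : Fin (p+2+1), 2 ≤ (j:ℕ) →
            z (Sum.inl j) = 0 ∨ a j * z (Sum.inr 1) = b j * z (Sum.inr 0) := by
          intro j hj
          rcases mul_eq_zero.mp (Ej j hj) with h | h
          · exact Or.inl (hpz _ h)
          · exact Or.inr (by linear_combination h)
        have hOne : ∀ j j' : Fin (p+2+1), 2 ≤ (j:ℕ) → 2 ≤ (j':ℕ) →
            a j * z (Sum.inr 1) = b j * z (Sum.inr 0) → a j' * z (Sum.inr 1) = b j' * z (Sum.inr 0) → j = j' := by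
          intro j j' hj hj' h h'
          apply hdist j j' hj hj'
          have : z (Sum.inr 0) * (b j * a j' - b j' * a j) = 0 := by
            linear_combination a j * h' - a j' * h
          have h2 := (mul_eq_zero.mp this).resolve_left hu0
          linear_combination h2
        by_cases hx0 : z (Sum.inl 0) = 0
        · -- subcase x0 = 0
          have hx1 : z (Sum.inl 1) = 0 := by
            have : z (Sum.inr 0) ^ 3 * z (Sum.inl 1) = 0 := by
              rw [hx0] at hq2; linear_combination -hq2
            exact (mul_eq_zero.mp this).resolve_left (pow_ne_zero 3 hu0)
          have hlam : lam = 0 := by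
            have h3 : lam * z (Sum.inr 1) ^ 3 = 0 := by
              rw [E0, hx0, zero_pow (show m ≠ 0 by omega)]; ring
            exact (mul_eq_zero.mp h3).resolve_right (pow_ne_zero 3 hv0)
          -- find j with x j ≠ 0
          have hxne := Function.ne_iff.mp hx
          obtain ⟨j, hj⟩ := hxne
          simp only [Pi.zero_apply] at hj
          have hj2 : 2 ≤ (j:ℕ) := by
            rcases fin_tri j with h | h | h
            · exact absurd (h ▸ hx0) hj
            · exact absurd (h ▸ hx1) hj
            · exact h
          have hjr : a j * z (Sum.inr 1) = b j * z (Sum.inr 0) := (hxor j hj2).resolve_left hj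
          -- A = 0
          have hA0 : z (Sum.inl 1) ^ (m+1) +
              ∑ i ∈ Finset.univ.filter (fun i : Fin (p+2+1) => 2 ≤ (i:ℕ)),
                a i * z (Sum.inl i) ^ (m+1) = 0 := by
            rw [← Ev, hlam]; ring
          have hsum : ∑ i ∈ Finset.univ.filter (fun i : Fin (p+2+1) => 2 ≤ (i:ℕ)),
              a i * z (Sum.inl i) ^ (m+1) = a j * z (Sum.inl j) ^ (m+1) := by
            apply Finset.sum_eq_single_of_mem j (by simp [hj2])
            intro i hi hne
            have hi2 : 2 ≤ (i:ℕ) := (Finset.mem_filter.mp hi).2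
            have : z (Sum.inl i) = 0 := by
              rcases hxor i hi2 with h | h
              · exact h
              · exact absurd (hOne i j hi2 hj2 h hjr) hne
            rw [this]; simp
          rw [hsum, hx1, zero_pow (show m+1 ≠ 0 by omega)] at hA0
          have : a j * z (Sum.inl j) ^ (m+1) = 0 := by linear_combination hA0
          rcases mul_eq_zero.mp this with h | h
          · exact absurd h (ha j hj2)
          · exact hj (pow_eq_zero_iff (by omega) |>.mp h)
        · -- subcase x0 ≠ 0, the main case
          have hx1 : z (Sum.inl 1) ≠ 0 := by
            intro hx1
            have : z (Sum.inr 1) ^ 3 * z (Sum.inl 0) = 0 := by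
              rw [hx1] at hq2; linear_combination hq2
            exact hx0 ((mul_eq_zero.mp this).resolve_left (pow_ne_zero 3 hv0))
          -- star
          have hstar : z (Sum.inl 0) ^ m * z (Sum.inr 0) ^ 4 = z (Sum.inl 1) ^ m * z (Sum.inr 1) ^ 4 := by
            have h' : ((m:ℂ)+1) * (z (Sum.inl 0) ^ m * z (Sum.inr 0) ^ 4) =
                ((m:ℂ)+1) * (z (Sum.inl 1) ^ m * z (Sum.inr 1) ^ 4) := by
              linear_combination (z (Sum.inr 0)^3) * E0 + (z (Sum.inr 1)^3) * E1
            exact mul_left_cancel₀ hdC h'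
          have h2m : z (Sum.inr 0) ^ (3*m) * z (Sum.inl 1) ^ m = z (Sum.inr 1) ^ (3*m) * z (Sum.inl 0) ^ m := by
            have hq2' : z (Sum.inr 0) ^ 3 * z (Sum.inl 1) = z (Sum.inr 1) ^ 3 * z (Sum.inl 0) := by
              linear_combination -hq2
            calc z (Sum.inr 0) ^ (3*m) * z (Sum.inl 1) ^ m = (z (Sum.inr 0)^3 * z (Sum.inl 1))^m := by
                  rw [mul_pow, ← pow_mul]
              _ = (z (Sum.inr 1)^3 * z (Sum.inl 0))^m := by rw [hq2']
              _ = z (Sum.inr 1) ^ (3*m) * z (Sum.inl 0) ^ m := by rw [mul_pow, ← pow_mul]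
          have hUV : z (Sum.inr 0) ^ (3*m+4) = z (Sum.inr 1) ^ (3*m+4) := by
            have hpow : z (Sum.inl 0) ^ m * z (Sum.inr 0) ^ (3*m+4) =
                z (Sum.inl 0) ^ m * z (Sum.inr 1) ^ (3*m+4) := by
              linear_combination (z (Sum.inr 0)^(3*m)) * hstar + (z (Sum.inr 1)^4) * h2m
            exact mul_left_cancel₀ (pow_ne_zero m hx0) hpow
          have hallz : ∀ j : Fin (p+2+1), 2 ≤ (j:ℕ) → z (Sum.inl j) = 0 := by
            intro j hj
            rcases hxor j hj with h | h
            · exact h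
            · exfalso
              apply hroot j hj (3*m+4) (by omega)
              have hv' : b j / a j * z (Sum.inr 0) = z (Sum.inr 1) := by
                rw [div_mul_eq_mul_div, div_eq_iff (ha j hj)]
                linear_combination -h
              have : (b j / a j) ^ (3*m+4) * z (Sum.inr 0) ^ (3*m+4) = z (Sum.inr 0) ^ (3*m+4) := by
                rw [← mul_pow, hv', ← hUV]
              exact mul_right_cancel₀ (pow_ne_zero (3*m+4) hu0) (by linear_combination this)
          have hsumA : ∑ i ∈ Finset.univ.filter (fun i : Fin (p+2+1) => 2 ≤ (i:ℕ)),
              a i * z (Sum.inl i) ^ (m+1) = 0 := by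
            apply Finset.sum_eq_zero
            intro i hi
            rw [hallz i (Finset.mem_filter.mp hi).2]
            rw [zero_pow (by omega)]; ring
          have hsumB : ∑ i ∈ Finset.univ.filter (fun i : Fin (p+2+1) => 2 ≤ (i:ℕ)),
              b i * z (Sum.inl i) ^ (m+1) = 0 := by
            apply Finset.sum_eq_zero
            intro i hi
            rw [hallz i (Finset.mem_filter.mp hi).2]
            rw [zero_pow (by omega)]; ring
          rw [hsumA, hsumB] at hq1
          rw [hsumA] at Ev
          -- final contradiction
          have hfin : (3*(m:ℂ)+4) * (z (Sum.inl 0) ^ (m+1) * z (Sum.inr 0)) = 0 := by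
            linear_combination (-z (Sum.inr 1)) * Ev + (3 * z (Sum.inl 0)) * E0 - hq1
          have hc : (3*(m:ℂ)+4) ≠ 0 := by
            have := Nat.cast_ne_zero (R := ℂ) (n := 3*m+4) |>.mpr (by omega)
            push_cast at this; exact this
          have h9 := (mul_eq_zero.mp hfin).resolve_left hc
          rcases mul_eq_zero.mp h9 with h | h
          · exact hx0 (pow_eq_zero_iff (by omega) |>.mp h)
          · exact hu0 h
end
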